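/- Under Assumptions 1.1, 1.2 and 1.3, the sequence {f(θ_n)}_{n≥0} converges almost surely on Λ = {sup_{n≥0} ‖θ_n‖ < ∞}, with lim_{n→∞} f(θ_n) = liminf_{n→∞} f(θ_n). -/

import Mathlib

/-
Fix a window `n ≤ m ≤ a(n, 1)`, on which `γ` grows by at most `1`. By Abel summation, the bound
on the weighted noise sums `∑ α_i γ_i ^ r ξ_i` makes the accumulated noise `∑ α_i ξ_i` of size
`O(γ_n ^ (-r))`. The shadow iterate `θ_k + ∑_{n ≤ i < k} α_i ξ_i` then performs exact gradient
steps evaluated at points `O(γ_n ^ (-r))` away, so the descent lemma for the gradient, Lipschitz on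
a ball containing the bounded trajectory, gives `f(θ_m) ≤ f(θ_n) + K γ_n ^ (-r)`. Consecutive
windows advance `γ` by at least `1/2`, and the potential `c γ ^ (1 - r)` absorbs the errors along
the chain of windows: `f(θ_m) ≤ f(θ_n) + c γ_n ^ (1 - r)` for all `m ≥ n`. A bounded sequence
that is decreasing up to a vanishing error converges, to its `liminf`.
-/

open Filter Finset InnerProductSpace MeasureTheory Topology
open scoped NNReal

lemma mul_rpow_neg_mul_le_rpow_sub_rpow {r x h : ℝ} (hr : 1 ≤ r) (hx : 0 < x) (hh : 0 ≤ h) :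
    (r - 1) * (x + h) ^ (-r) * h ≤ x ^ (1 - r) - (x + h) ^ (1 - r) := by
  have hD : Convex ℝ (Set.Icc x (x + h)) := convex_Icc _ _
  have hpos : ∀ t ∈ Set.Icc x (x + h), 0 < t := fun t ht => hx.trans_le ht.1
  have hderiv : ∀ t ∈ Set.Icc x (x + h),
      HasDerivAt (fun u : ℝ => u ^ (1 - r)) ((1 - r) * t ^ (-r)) t := fun t ht => by
    simpa using Real.hasDerivAt_rpow_const (p := 1 - r) (Or.inl (hpos t ht).ne')
  have := hD.image_sub_le_mul_sub_of_deriv_le (f := fun u : ℝ => u ^ (1 - r))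
    (fun t ht => (hderiv t ht).continuousAt.continuousWithinAt)
    (fun t ht => (hderiv t (interior_subset ht)).differentiableAt.differentiableWithinAt)
    (C := (1 - r) * (x + h) ^ (-r)) (fun t ht => by
      rw [(hderiv t (interior_subset ht)).deriv]
      exact mul_le_mul_of_nonpos_left
        (Real.rpow_le_rpow_of_nonpos (hpos t (interior_subset ht))
          (interior_subset (s := Set.Icc x (x + h)) ht).2 (by linarith)) (by linarith))
    x (Set.left_mem_Icc.2 (by linarith)) (x + h) (Set.right_mem_Icc.2 (by linarith))
    (by linarith)
  simp only [add_sub_cancel_left] at this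
  linarith

lemma mul_rpow_neg_add_le {r K x y : ℝ} (hr : 1 < r) (hK : 0 ≤ K) (hx : 1 / 2 ≤ x)
    (hxy : x + 1 / 2 ≤ y) :
    K * x ^ (-r) + K * 2 ^ (r + 1) / (r - 1) * y ^ (1 - r) ≤
      K * 2 ^ (r + 1) / (r - 1) * x ^ (1 - r) := by
  have hx0 : 0 < x := by linarith
  have hr1 : 0 < r - 1 := by linarith
  have hc : 0 ≤ K * 2 ^ (r + 1) / (r - 1) := by positivity
  have hy : y ^ (1 - r) ≤ (x + 1 / 2) ^ (1 - r) :=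
    Real.rpow_le_rpow_of_nonpos (by linarith) hxy (by linarith)
  have hgap : (r - 1) * (2 * x) ^ (-r) * (1 / 2) ≤ x ^ (1 - r) - (x + 1 / 2) ^ (1 - r) := by
    refine le_trans ?_ (mul_rpow_neg_mul_le_rpow_sub_rpow hr.le hx0 (by norm_num))
    have : (2 * x) ^ (-r) ≤ (x + 1 / 2) ^ (-r) :=
      Real.rpow_le_rpow_of_nonpos (by linarith) (by linarith) (by linarith)
    gcongr
  have hK : K * x ^ (-r) = K * 2 ^ (r + 1) / (r - 1) * ((r - 1) * (2 * x) ^ (-r) * (1 / 2)) := by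
    rw [Real.mul_rpow (by norm_num) hx0.le, Real.rpow_add two_pos, Real.rpow_neg two_pos.le,
      Real.rpow_one]
    field_simp
  rw [hK]
  nlinarith [mul_le_mul_of_nonneg_left hgap hc, mul_le_mul_of_nonneg_left hy hc]

lemma le_add_of_forall_window_le {F ε φ : ℕ → ℝ} {w : ℕ → ℕ} {N : ℕ}
    (hφ : ∀ n, N ≤ n → 0 ≤ φ n)
    (hw : ∀ n, N ≤ n → n < w n)
    (hwin : ∀ n, N ≤ n → ∀ m, n ≤ m → m ≤ w n → F m ≤ F n + ε n)
    (hpot : ∀ n, N ≤ n → ε n + φ (w n) ≤ φ n) :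
    ∀ n, N ≤ n → ∀ m, n ≤ m → F m ≤ F n + φ n := by
  suffices ∀ p n, N ≤ n → ∀ m, n ≤ m → m - n < p → F m ≤ F n + φ n from
    fun n hn m hnm => this _ n hn m hnm (Nat.lt_succ_self _)
  intro p
  induction p with
  | zero => intro n _ m _ h; omega
  | succ p ih =>
    intro n hn m hnm hp
    rcases le_or_gt m (w n) with hm | hm
    · linarith [hwin n hn m hnm hm, hpot n hn, hφ (w n) (by linarith [hw n hn])]
    · have hwn := hw n hn
      linarith [ih (w n) (by omega) m hm.le (by omega), hwin n hn (w n) hwn.le le_rfl, hpot n hn]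

lemma tendsto_liminf_of_le_add {F φ : ℕ → ℝ} (hF : IsBoundedUnder (· ≥ ·) atTop F)
    (hφ : Tendsto φ atTop (𝓝 0)) {N : ℕ} (h : ∀ n, N ≤ n → ∀ m, n ≤ m → F m ≤ F n + φ n) :
    Tendsto F atTop (𝓝 (liminf F atTop)) := by
  have hF' : IsBoundedUnder (· ≤ ·) atTop F :=
    ⟨F N + φ N, eventually_map.2 ((eventually_ge_atTop N).mono (h N le_rfl))⟩
  have hlimsup : ∀ n, N ≤ n → limsup F atTop ≤ F n + φ n := fun n hn =>
    limsup_le_of_le hF.isCoboundedUnder_le ((eventually_ge_atTop n).mono (h n hn))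
  have hle : limsup F atTop ≤ liminf F atTop := by
    refine le_of_forall_pos_le_add fun δ hδ => sub_le_iff_le_add.1 ?_
    refine le_liminf_of_le hF'.isCoboundedUnder_ge ?_
    filter_upwards [eventually_ge_atTop N, hφ.eventually (eventually_le_nhds hδ)] with n hn hφn
    linarith [hlimsup n hn]
  exact tendsto_of_liminf_eq_limsup rfl (le_antisymm hle (liminf_le_limsup hF' hF)) hF' hF

/-- Abel summation. -/
lemma norm_sum_Ico_smul_le_of_antitoneOn {E : Type*} [SeminormedAddCommGroup E]
    [NormedSpace ℝ E] {v : ℕ → E} {b : ℕ → ℝ} {B : ℝ} {n m : ℕ} (hnm : n ≤ m)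
    (hb : AntitoneOn b (Set.Icc n m)) (hbm : 0 ≤ b m)
    (hS : ∀ k ∈ Icc n m, ‖∑ i ∈ Ico n k, v i‖ ≤ B) :
    ‖∑ i ∈ Ico n m, b i • v i‖ ≤ B * b n := by
  set T : ℕ → E := fun j => ∑ i ∈ Ico n j, b i • v i
  set S : ℕ → E := fun j => ∑ i ∈ Ico n j, v i
  have hinv : ∀ j, n ≤ j → j ≤ m → ‖T j - b j • S j‖ ≤ B * (b n - b j) := by
    intro j hnj
    induction j, hnj using Nat.le_induction with
    | base => simp [T, S]
    | succ j hnj ih =>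
      intro hjm
      have hbj : b (j + 1) ≤ b j :=
        hb ⟨hnj, by omega⟩ ⟨by omega, hjm⟩ (Nat.le_succ j)
      have hsplit : T (j + 1) - b (j + 1) • S (j + 1) =
          (T j - b j • S j) + (b j - b (j + 1)) • S (j + 1) := by
        simp only [T, S, sum_Ico_succ_top hnj, sub_smul, smul_add]
        abel
      have hlast : ‖(b j - b (j + 1)) • S (j + 1)‖ ≤ (b j - b (j + 1)) * B := by
        rw [norm_smul, Real.norm_of_nonneg (sub_nonneg.2 hbj)]
        exact mul_le_mul_of_nonneg_left (hS _ (mem_Icc.2 ⟨by omega, hjm⟩)) (sub_nonneg.2 hbj)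
      calc ‖T (j + 1) - b (j + 1) • S (j + 1)‖
          ≤ ‖T j - b j • S j‖ + ‖(b j - b (j + 1)) • S (j + 1)‖ := hsplit ▸ norm_add_le _ _
        _ ≤ B * (b n - b j) + (b j - b (j + 1)) * B := add_le_add (ih (by omega)) hlast
        _ = B * (b n - b (j + 1)) := by ring
  have hSm : ‖b m • S m‖ ≤ b m * B := by
    rw [norm_smul, Real.norm_of_nonneg hbm]
    exact mul_le_mul_of_nonneg_left (hS m (right_mem_Icc.2 hnm)) hbm
  calc ‖T m‖ ≤ ‖T m - b m • S m‖ + ‖b m • S m‖ := norm_le_norm_sub_add _ _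
    _ ≤ B * (b n - b m) + b m * B := add_le_add (hinv m hnm le_rfl) hSm
    _ = B * b n := by ring

lemma norm_sum_Ico_smul_le_mul_rpow_neg {E : Type*} [SeminormedAddCommGroup E]
    [NormedSpace ℝ E] {α γ : ℕ → ℝ} {e : ℕ → E} {r B : ℝ} {n m : ℕ} (hnm : n ≤ m) (hr : 0 ≤ r)
    (hγ : MonotoneOn γ (Set.Icc n m)) (hγn : 0 < γ n)
    (hS : ∀ k ∈ Icc n m, ‖∑ i ∈ Ico n k, (α i * γ i ^ r) • e i‖ ≤ B) :
    ‖∑ i ∈ Ico n m, α i • e i‖ ≤ B * γ n ^ (-r) := by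
  have hγpos : ∀ i ∈ Set.Icc n m, 0 < γ i := fun i hi =>
    hγn.trans_le (hγ (Set.left_mem_Icc.2 hnm) hi hi.1)
  have hsum : ∑ i ∈ Ico n m, α i • e i = ∑ i ∈ Ico n m, γ i ^ (-r) • (α i * γ i ^ r) • e i := by
    refine sum_congr rfl fun i hi => ?_
    have hi' := mem_Ico.1 hi
    rw [smul_smul, ← mul_assoc, mul_comm _ (α i), mul_assoc, ← Real.rpow_add
      (hγpos i ⟨hi'.1, hi'.2.le⟩), neg_add_cancel, Real.rpow_zero, mul_one]
  rw [hsum]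
  refine norm_sum_Ico_smul_le_of_antitoneOn hnm (fun i hi j hj hij => ?_)
    (Real.rpow_nonneg (hγpos m (Set.right_mem_Icc.2 hnm)).le _) hS
  exact Real.rpow_le_rpow_of_nonpos (hγpos i hi) (hγ hi hj hij) (by linarith)

section Gradient

variable {E : Type*} [NormedAddCommGroup E] [InnerProductSpace ℝ E] [CompleteSpace E]
  {f : E → ℝ} {K : Set E}

lemma Convex.norm_sub_le_of_norm_gradient_le (hK : Convex ℝ K) (hf : Differentiable ℝ f)
    {G : ℝ} (hG : ∀ z ∈ K, ‖gradient f z‖ ≤ G) {x y : E} (hx : x ∈ K) (hy : y ∈ K) :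
    ‖f y - f x‖ ≤ G * ‖y - x‖ :=
  hK.norm_image_sub_le_of_norm_hasFDerivWithin_le (f' := fun z => toDual ℝ E (gradient f z))
    (fun z _ => (hf z).hasGradientAt.hasFDerivAt.hasFDerivWithinAt)
    (fun z hz => (LinearIsometryEquiv.norm_map _ _).trans_le (hG z hz)) hx hy

lemma Convex.le_add_inner_gradient_add (hK : Convex ℝ K) (hf : Differentiable ℝ f) {L : ℝ≥0}
    (hL : LipschitzOnWith L (gradient f) K) {x y : E} (hx : x ∈ K) (hy : y ∈ K) :
    f y ≤ f x + inner ℝ (gradient f x) (y - x) + L * ‖y - x‖ ^ 2 := by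
  set φ : E → ℝ := fun z => f z - inner ℝ (gradient f x) z
  have hφ : ‖φ y - φ x‖ ≤ (L * ‖y - x‖) * ‖y - x‖ := by
    refine (convex_segment x y).norm_image_sub_le_of_norm_hasFDerivWithin_le
      (f' := fun z => toDual ℝ E (gradient f z - gradient f x)) (fun z _ => ?_) (fun z hz => ?_)
      (left_mem_segment ℝ x y) (right_mem_segment ℝ x y)
    · rw [map_sub]
      exact ((hf z).hasGradientAt.hasFDerivAt.sub
        (toDual ℝ E (gradient f x)).hasFDerivAt).hasFDerivWithinAt
    · obtain ⟨t, ⟨ht0, ht1⟩, rfl⟩ := (segment_eq_image' ℝ x y ▸ hz :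
        z ∈ (fun t : ℝ => x + t • (y - x)) '' Set.Icc 0 1)
      have hzx : ‖x + t • (y - x) - x‖ ≤ ‖y - x‖ := by
        rw [add_sub_cancel_left, norm_smul, Real.norm_of_nonneg ht0]
        exact mul_le_of_le_one_left (norm_nonneg _) ht1
      rw [LinearIsometryEquiv.norm_map]
      exact (hL.norm_sub_le (hK.segment_subset hx hy hz) hx).trans (by gcongr)
  have hφxy : φ y - φ x = f y - f x - inner ℝ (gradient f x) (y - x) := by
    simp only [φ, inner_sub_right]; ring
  rw [Real.norm_eq_abs, hφxy] at hφ
  nlinarith [le_abs_self (f y - f x - inner ℝ (gradient f x) (y - x))]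

lemma Convex.apply_sub_smul_gradient_le (hK : Convex ℝ K) (hf : Differentiable ℝ f)
    {L : ℝ≥0} (hL : LipschitzOnWith L (gradient f) K) {x u : E} {t ρ G : ℝ} (ht : 0 ≤ t)
    (htL : t * L ≤ 1) (hx : x ∈ K) (hu : u ∈ K) (hu' : u - t • gradient f x ∈ K)
    (hux : ‖u - x‖ ≤ ρ) (hG : ‖gradient f x‖ ≤ G) :
    f (u - t • gradient f x) ≤ f u + t * (L * ρ * G) := by
  set g := gradient f x
  have hdesc := hK.le_add_inner_gradient_add hf hL hu hu'
  rw [sub_sub_cancel_left, inner_neg_right, real_inner_smul_right, norm_neg, norm_smul,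
    Real.norm_of_nonneg ht] at hdesc
  have hcross : |inner ℝ (gradient f u - g) g| ≤ L * ρ * G :=
    (abs_real_inner_le_norm _ _).trans <| mul_le_mul
      ((hL.norm_sub_le hu hx).trans (by gcongr)) hG (norm_nonneg _)
      (mul_nonneg L.2 ((norm_nonneg _).trans hux))
  have hsplit : inner ℝ (gradient f u) g = ‖g‖ ^ 2 + inner ℝ (gradient f u - g) g := by
    rw [inner_sub_left, real_inner_self_eq_norm_sq]; ring
  have hsmall : L * (t * ‖g‖) ^ 2 ≤ t * ‖g‖ ^ 2 := by
    calc L * (t * ‖g‖) ^ 2 = t * (t * L) * ‖g‖ ^ 2 := by ring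
      _ ≤ t * 1 * ‖g‖ ^ 2 := by gcongr
      _ = t * ‖g‖ ^ 2 := by ring
  nlinarith [neg_abs_le (inner ℝ (gradient f u - g) g)]

/-- The shadow iterate `x k + ∑ i ∈ Ico n k, α i • e i` makes the exact steps
`- α k • gradient f (x k)`. -/
lemma Convex.le_of_perturbed_gradient_steps (hK : Convex ℝ K) (hf : Differentiable ℝ f)
    {L : ℝ≥0} (hL : LipschitzOnWith L (gradient f) K) {G ρ : ℝ}
    (hG : ∀ z ∈ K, ‖gradient f z‖ ≤ G) {α : ℕ → ℝ} {x e : ℕ → E}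
    (hrec : ∀ k, x (k + 1) = x k - α k • (gradient f (x k) + e k)) {n m : ℕ} (hnm : n ≤ m)
    (hα : ∀ k ∈ Ico n m, 0 ≤ α k ∧ α k * L ≤ 1) (hx : ∀ k ∈ Icc n m, x k ∈ K)
    (hu : ∀ k ∈ Icc n m, x k + ∑ i ∈ Ico n k, α i • e i ∈ K)
    (hs : ∀ k ∈ Icc n m, ‖∑ i ∈ Ico n k, α i • e i‖ ≤ ρ) :
    f (x m) ≤ f (x n) + (∑ i ∈ Ico n m, α i) * (L * ρ * G) + G * ρ := by
  set u : ℕ → E := fun k => x k + ∑ i ∈ Ico n k, α i • e i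
  have hshadow : ∀ k, n ≤ k → k ≤ m →
      f (u k) ≤ f (x n) + (∑ i ∈ Ico n k, α i) * (L * ρ * G) := by
    intro k hnk
    induction k, hnk using Nat.le_induction with
    | base => simp [u]
    | succ k hnk ih =>
      intro hkm
      have hstep : u (k + 1) = u k - α k • gradient f (x k) := by
        simp only [u, sum_Ico_succ_top hnk, hrec k, smul_add]
        abel
      have hk : k ∈ Icc n m := Finset.mem_Icc.2 ⟨hnk, by omega⟩
      have hk1 : k + 1 ∈ Icc n m := Finset.mem_Icc.2 ⟨by omega, hkm⟩
      obtain ⟨hα0, hαL⟩ := hα k (Finset.mem_Ico.2 ⟨hnk, hkm⟩)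
      have hux : ‖u k - x k‖ ≤ ρ := by simpa [u] using hs k hk
      have := hK.apply_sub_smul_gradient_le hf hL hα0 hαL (hx k hk) (hu k hk)
        (hstep ▸ hu (k + 1) hk1) hux (hG _ (hx k hk))
      rw [hstep, sum_Ico_succ_top hnk]
      linarith [ih (by omega)]
  have hm : m ∈ Icc n m := Finset.right_mem_Icc.2 hnm
  have hxu : ‖f (x m) - f (u m)‖ ≤ G * ‖x m - u m‖ :=
    hK.norm_sub_le_of_norm_gradient_le hf hG (hu m hm) (hx m hm)
  have hG0 : 0 ≤ G := (norm_nonneg _).trans (hG _ (hx m hm))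
  have : ‖x m - u m‖ ≤ ρ := by simpa [u] using hs m hm
  nlinarith [le_abs_self (f (x m) - f (u m)), Real.norm_eq_abs (f (x m) - f (u m)),
    hshadow m hnm le_rfl]

end Gradient

section Descent

variable {E : Type*} [NormedAddCommGroup E] [InnerProductSpace ℝ E] [ProperSpace E]
  {f : E → ℝ} {α γ : ℕ → ℝ} {a : ℕ → ℕ} {x e : ℕ → E} {C r B : ℝ} {N₀ : ℕ}

lemma exists_eventually_window_le (hf : Differentiable ℝ f) (hlip : LocallyLipschitz (gradient f))
    (hα : ∀ n, 0 < α n) (hα0 : Tendsto α atTop (𝓝 0)) (hγ : ∀ n, γ n = ∑ i ∈ range n, α i)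
    (hγtop : Tendsto γ atTop atTop) (ha : ∀ n, n ≤ a n ∧ γ (a n) - γ n ≤ 1)
    (hrec : ∀ n, x (n + 1) = x n - α n • (gradient f (x n) + e n)) (hC : ∀ n, ‖x n‖ ≤ C)
    (hr : 0 < r)
    (hB : ∀ n, N₀ ≤ n → ∀ k ∈ Icc n (a n), ‖∑ i ∈ Ico n k, (α i * γ i ^ r) • e i‖ ≤ B) :
    ∃ K₀, 0 ≤ K₀ ∧ ∀ᶠ n in atTop, ∀ m, n ≤ m → m ≤ a n → f (x m) ≤ f (x n) + K₀ * γ n ^ (-r) := by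
  set K := Metric.closedBall (0 : E) (C + 1)
  have hxK : ∀ n, x n ∈ K := fun n => mem_closedBall_zero_iff.2 ((hC n).trans (by linarith))
  obtain ⟨L, hL⟩ := hlip.locallyLipschitzOn.exists_lipschitzOnWith_of_compact
    (isCompact_closedBall (0 : E) (C + 1))
  obtain ⟨G, hG⟩ := (isCompact_closedBall (0 : E) (C + 1)).exists_bound_of_continuousOn
    hlip.continuous.continuousOn
  have hG0 : 0 ≤ G := (norm_nonneg _).trans (hG _ (hxK 0))
  have hB0 : 0 ≤ B := by simpa using hB N₀ le_rfl N₀ (left_mem_Icc.2 (ha N₀).1)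
  have hγmono : Monotone γ := monotone_nat_of_le_succ fun n => by
    rw [hγ, hγ, sum_range_succ]; linarith [hα n]
  have hαL : Tendsto (fun n => α n * L) atTop (𝓝 0) := by simpa using hα0.mul_const (L : ℝ)
  obtain ⟨N₁, hN₁⟩ := eventually_atTop.1 (hαL.eventually (eventually_le_nhds one_pos))
  have hρ : Tendsto (fun n => B * γ n ^ (-r)) atTop (𝓝 0) := by
    simpa using ((tendsto_rpow_neg_atTop hr).comp hγtop).const_mul B
  refine ⟨(L + 1) * G * B, by positivity, ?_⟩
  filter_upwards [eventually_ge_atTop N₀, eventually_ge_atTop N₁, hγtop.eventually_gt_atTop 0,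
    hρ.eventually (eventually_le_nhds one_pos)] with n hnN₀ hnN₁ hγn hρn m hnm hma
  have hs : ∀ k ∈ Icc n m, ‖∑ i ∈ Ico n k, α i • e i‖ ≤ B * γ n ^ (-r) := fun k hk =>
    norm_sum_Ico_smul_le_mul_rpow_neg (mem_Icc.1 hk).1 hr.le (hγmono.monotoneOn _) hγn
      fun j hj => hB n hnN₀ j (mem_Icc.2 ⟨(mem_Icc.1 hj).1, by linarith [(mem_Icc.1 hj).2,
        (mem_Icc.1 hk).2]⟩)
  have hρ0 : 0 ≤ B * γ n ^ (-r) := (norm_nonneg _).trans (hs n (left_mem_Icc.2 hnm))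
  have hstep : ∀ k ∈ Ico n m, 0 ≤ α k ∧ α k * L ≤ 1 := fun k hk =>
    ⟨(hα k).le, hN₁ k (hnN₁.trans (mem_Ico.1 hk).1)⟩
  have hu : ∀ k ∈ Icc n m, x k + ∑ i ∈ Ico n k, α i • e i ∈ K := fun k hk =>
    mem_closedBall_zero_iff.2 ((norm_add_le _ _).trans (add_le_add (hC k) ((hs k hk).trans hρn)))
  have hsum : ∑ i ∈ Ico n m, α i ≤ 1 := by
    rw [sum_Ico_eq_sub _ hnm, ← hγ, ← hγ]
    linarith [hγmono hma, (ha n).2]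
  have := (convex_closedBall (0 : E) (C + 1)).le_of_perturbed_gradient_steps hf hL hG hrec hnm
    hstep (fun k _ => hxK k) hu hs
  have hLρG : 0 ≤ L * (B * γ n ^ (-r)) * G := by positivity
  nlinarith [mul_le_mul_of_nonneg_right hsum hLρG]

theorem tendsto_liminf_of_perturbed_gradient_descent (hf : Differentiable ℝ f)
    (hlip : LocallyLipschitz (gradient f)) (hα : ∀ n, 0 < α n) (hα0 : Tendsto α atTop (𝓝 0))
    (hγ : ∀ n, γ n = ∑ i ∈ range n, α i) (hγtop : Tendsto γ atTop atTop)
    (ha : ∀ n, n ≤ a n ∧ γ (a n) - γ n ≤ 1 ∧ 1 < γ (a n + 1) - γ n)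
    (hrec : ∀ n, x (n + 1) = x n - α n • (gradient f (x n) + e n)) (hC : ∀ n, ‖x n‖ ≤ C)
    (hr : 1 < r)
    (hB : ∀ n, N₀ ≤ n → ∀ k ∈ Icc n (a n), ‖∑ i ∈ Ico n k, (α i * γ i ^ r) • e i‖ ≤ B) :
    Tendsto (fun n => f (x n)) atTop (𝓝 (liminf (fun n => f (x n)) atTop)) := by
  obtain ⟨K₀, hK₀, hwin⟩ := exists_eventually_window_le hf hlip hα hα0 hγ hγtop
    (fun n => ⟨(ha n).1, (ha n).2.1⟩) hrec hC (by linarith) hB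
  have hc : 0 ≤ K₀ * 2 ^ (r + 1) / (r - 1) := div_nonneg (by positivity) (by linarith)
  obtain ⟨N, hN⟩ := eventually_atTop.1 (hwin.and
    ((hα0.eventually (eventually_le_nhds (by norm_num : (0 : ℝ) < 1 / 2))).and
      (hγtop.eventually_ge_atTop (1 / 2))))
  have hγsucc : ∀ n, γ (n + 1) = γ n + α n := fun n => by rw [hγ, hγ, sum_range_succ]
  have hjump : ∀ n, N ≤ n → γ n + 1 / 2 ≤ γ (a n) := fun n hn => by
    have := (ha n).2.2
    rw [hγsucc] at this
    linarith [(hN (a n) (hn.trans (ha n).1)).2.1]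
  have hquasi := le_add_of_forall_window_le (F := fun n => f (x n))
    (φ := fun n => K₀ * 2 ^ (r + 1) / (r - 1) * γ n ^ (1 - r)) (w := a)
    (fun n hn => mul_nonneg hc (Real.rpow_nonneg (by linarith [(hN n hn).2.2]) _))
    (fun n hn => (ha n).1.lt_of_ne fun h => by
      have := hjump n hn
      rw [← h] at this
      linarith)
    (fun n hn => (hN n hn).1)
    (fun n hn => mul_rpow_neg_add_le hr hK₀ (hN n hn).2.2 (hjump n hn))
  obtain ⟨M, hM⟩ := (isCompact_closedBall (0 : E) C).exists_bound_of_continuousOn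
    hf.continuous.continuousOn
  refine tendsto_liminf_of_le_add (isBoundedUnder_of ⟨-M, fun n => ?_⟩) ?_ hquasi
  · exact (abs_le.1 (hM _ (mem_closedBall_zero_iff.2 (hC n)))).1
  · simpa [neg_sub] using ((tendsto_rpow_neg_atTop (by linarith : 0 < r - 1)).comp
      hγtop).const_mul (K₀ * 2 ^ (r + 1) / (r - 1))

end Descent

lemma sSup_window_spec {γ : ℕ → ℝ} (hγ : Tendsto γ atTop atTop) (n : ℕ) {t : ℝ} (ht : 0 ≤ t) :
    n ≤ sSup {k | n ≤ k ∧ γ k - γ n ≤ t} ∧ γ (sSup {k | n ≤ k ∧ γ k - γ n ≤ t}) - γ n ≤ t ∧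
      t < γ (sSup {k | n ≤ k ∧ γ k - γ n ≤ t} + 1) - γ n := by
  set W := {k | n ≤ k ∧ γ k - γ n ≤ t}
  have hbdd : BddAbove W := by
    obtain ⟨M, hM⟩ := (hγ.eventually_gt_atTop (γ n + t)).exists_forall_of_atTop
    exact ⟨M, fun k hk => not_lt.1 fun hMk => by linarith [hM k hMk.le, hk.2]⟩
  obtain ⟨hn, hle⟩ : sSup W ∈ W := Nat.sSup_mem ⟨n, le_rfl, by simpa using ht⟩ hbdd
  refine ⟨hn, hle, not_le.1 fun h => ?_⟩
  exact (Nat.lt_succ_self _).not_ge (le_csSup hbdd ⟨by omega, h⟩)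

lemma Set.Finite.le_biSup {ι α : Type*} [ConditionallyCompleteLattice α] {s : Set ι}
    (hs : s.Finite) (g : ι → α) {k : ι} (hk : k ∈ s) : g k ≤ ⨆ i ∈ s, g i := by
  have : Nonempty α := ⟨g k⟩
  refine le_ciSup₂ (f := fun i (_ : i ∈ s) => g i) ((hs.image g).bddAbove.mono ?_) k hk
  simp only [Set.subset_def, Set.mem_iUnion, Set.mem_range]
  rintro _ ⟨i, hi, rfl⟩
  exact ⟨i, hi, rfl⟩

lemma norm_sum_Ico_le_max_of_biSup_le {E : Type*} [SeminormedAddCommGroup E] {v : ℕ → E}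
    {n a : ℕ} {B : ℝ} (hB : ⨆ k ∈ Set.Ico n a, ‖∑ i ∈ Icc n k, v i‖ ≤ B) :
    ∀ k ∈ Icc n a, ‖∑ i ∈ Ico n k, v i‖ ≤ max B 0 := by
  intro k hk
  obtain rfl | ⟨j, rfl, hj⟩ : k = n ∨ ∃ j, k = j + 1 ∧ j ∈ Set.Ico n a := by
    obtain ⟨hnk, hka⟩ := mem_Icc.1 hk
    rcases hnk.eq_or_lt with h | h
    · exact .inl h.symm
    · exact .inr ⟨k - 1, by omega, by omega, by omega⟩
  · simp
  · rw [Ico_add_one_right_eq_Icc]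
    exact ((Set.finite_Ico _ _).le_biSup _ hj).trans (hB.trans (le_max_left _ _))

theorem stochastic_gradient_value_converges_general
    {d : ℕ}
    {Ω : Type} [MeasurableSpace Ω] (P : Measure Ω)
    (f : EuclideanSpace ℝ (Fin d) → ℝ)
    (hfd : Differentiable ℝ f)
    (hlip : LocallyLipschitz (fun x => gradient f x))
    (α : ℕ → ℝ) (hαpos : ∀ n, 0 < α n)
    (θ ξ : ℕ → Ω → EuclideanSpace ℝ (Fin d))
    (hrec : ∀ n ω, θ (n + 1) ω = θ n ω - α n • (gradient f (θ n ω) + ξ n ω))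
    -- Assumption 1.1
    (hα0 : Tendsto α atTop (nhds 0))
    (γ : ℕ → ℝ) (hγ : ∀ n, γ n = ∑ i ∈ Finset.range n, α i)
    (hαdiv : Tendsto γ atTop atTop)
    -- the interpolation index `a(n,t)`
    (a : ℕ → ℝ → ℕ)
    (ha : ∀ n t, 0 < t → a n t = sSup {k | n ≤ k ∧ γ k - γ n ≤ t})
    -- the event Λ
    (Λ : Set Ω) (hΛ : Λ = {ω | ∃ C, ∀ n, ‖θ n ω‖ ≤ C})
    -- Assumption 1.2
    (r : ℝ) (hr : 1 < r)
    (noise : ℕ → Ω → ℝ)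
    (hnoise : ∀ n ω, noise n ω =
      ⨆ k ∈ Set.Ico n (a n 1), ‖∑ i ∈ Finset.Icc n k, (α i * γ i ^ r) • ξ i ω‖)
    (hA12 : ∀ᵐ ω ∂P, ω ∈ Λ → IsBoundedUnder (· ≤ ·) atTop (fun n => noise n ω)) :
    ∀ᵐ ω ∂P, ω ∈ Λ →
      Tendsto (fun n => f (θ n ω)) atTop
        (nhds (Filter.liminf (fun n => f (θ n ω)) atTop)) := by
  filter_upwards [hA12] with ω hnoiseω hω
  obtain ⟨C, hC⟩ : ∃ C, ∀ n, ‖θ n ω‖ ≤ C := by simpa [hΛ] using hω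
  obtain ⟨B, hB⟩ := hnoiseω hω
  obtain ⟨N₀, hN₀⟩ := eventually_atTop.1 (eventually_map.1 hB)
  have hwindow : ∀ n, n ≤ a n 1 ∧ γ (a n 1) - γ n ≤ 1 ∧ 1 < γ (a n 1 + 1) - γ n := fun n => by
    rw [ha n 1 one_pos]
    exact sSup_window_spec hαdiv n zero_le_one
  exact tendsto_liminf_of_perturbed_gradient_descent hfd hlip hαpos hα0 hγ hαdiv hwindow
    (hrec · ω) hC hr fun n hn => norm_sum_Ico_le_max_of_biSup_le (hnoise n ω ▸ hN₀ n hn)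

/-- Lemma 1.3' of the paper: under Assumptions 1.1, 1.2 and
1.3, the sequence `{f(θ_n)}` converges almost surely on `Λ`, with limit equal
to `liminf_n f(θ_n)`. -/
theorem stochastic_gradient_value_converges
    {d : ℕ} (hd : 1 ≤ d)
    {Ω : Type} [MeasurableSpace Ω] (P : Measure Ω) [IsProbabilityMeasure P]
    (f : EuclideanSpace ℝ (Fin d) → ℝ)
    (hfd : Differentiable ℝ f)
    (hlip : LocallyLipschitz (fun x => gradient f x))
    (α : ℕ → ℝ) (hαpos : ∀ n, 0 < α n)
    (θ ξ : ℕ → Ω → EuclideanSpace ℝ (Fin d))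
    (hrec : ∀ n ω, θ (n + 1) ω = θ n ω - α n • (gradient f (θ n ω) + ξ n ω))
    -- Assumption 1.1
    (hα0 : Tendsto α atTop (nhds 0))
    (γ : ℕ → ℝ) (hγ : ∀ n, γ n = ∑ i ∈ Finset.range n, α i)
    (hαdiv : Tendsto γ atTop atTop)
    -- the interpolation index `a(n,t)`
    (a : ℕ → ℝ → ℕ)
    (ha : ∀ n t, 0 < t → a n t = sSup {k | n ≤ k ∧ γ k - γ n ≤ t})
    -- the event Λ
    (Λ : Set Ω) (hΛ : Λ = {ω | ∃ C, ∀ n, ‖θ n ω‖ ≤ C})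
    -- Assumption 1.2
    (r : ℝ) (hr : 1 < r)
    (noise : ℕ → Ω → ℝ)
    (hnoise : ∀ n ω, noise n ω =
      ⨆ k ∈ Set.Ico n (a n 1), ‖∑ i ∈ Finset.Icc n k, (α i * γ i ^ r) • ξ i ω‖)
    (hA12 : ∀ᵐ ω ∂P, ω ∈ Λ → IsBoundedUnder (· ≤ ·) atTop (fun n => noise n ω))
    -- Assumption 1.3 (Łojasiewicz-type gradient inequality)
    (hLoj : ∀ Q : Set (EuclideanSpace ℝ (Fin d)), IsCompact Q → ∀ b ∈ f '' Q,
      ∃ δ μ M : ℝ, δ ∈ Set.Ioc (0 : ℝ) 1 ∧ μ ∈ Set.Ioc (1 : ℝ) 2 ∧ 1 ≤ M ∧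
        ∀ x ∈ Q, |f x - b| ≤ δ → |f x - b| ≤ M * ‖gradient f x‖ ^ μ) :
    ∀ᵐ ω ∂P, ω ∈ Λ →
      Tendsto (fun n => f (θ n ω)) atTop
        (nhds (Filter.liminf (fun n => f (θ n ω)) atTop)) :=
  stochastic_gradient_value_converges_general P f hfd hlip α hαpos θ ξ hrec hα0 γ hγ hαdiv a ha Λ hΛ
    r hr noise hnoise hA12
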